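/- Let G and H be episodes with H transitively closed, and let n be a node of H such that no label of an event of n occurs among the labels of G. Let H' be the episode obtained from H by deleting the node n, its events, and all edges incident to n. Then G ⪯ H if and only if G ⪯ H'. -/

import Mathlib

/-- A sequence event: a unique id, a label (from alphabet encoded as `ℕ`),
and an integer time stamp. -/
structure SeqEvent where
  id : ℕ
  lab : ℕ
  ts : ℤ
deriving DecidableEq

/-- An event sequence: a finite collection of sequence events with distinct ids,
whose time stamps are monotone in the ids. -/
structure EventSeq where
  events : Finset SeqEvent
  id_inj : ∀ e ∈ events, ∀ f ∈ events, e.id = f.id → e = f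
  ts_mono : ∀ e ∈ events, ∀ f ∈ events, e.id ≤ f.id → e.ts ≤ f.ts

/-- An episode: a finite set of episode events (identified by ids in `ℕ`) with labels,
a finite set of graph nodes, a map from events to nodes (surjectivity and the DAG
property are recorded in `Episode.WellFormed`), and weak and proper edges. -/
structure Episode where
  events : Finset ℕ
  lab : ℕ → ℕ
  nodes : Finset ℕ
  node : ℕ → ℕ
  weak : ℕ → ℕ → Prop
  proper : ℕ → ℕ → Prop

namespace Episode

/-- An edge of the episode graph (weak or proper). -/
def edge (G : Episode) (a b : ℕ) : Prop := G.weak a b ∨ G.proper a b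

/-- `G.Desc m n` : `n` is a descendant of `m`, i.e. there is a directed path from `m` to `n`. -/
def Desc (G : Episode) (m n : ℕ) : Prop := Relation.TransGen G.edge m n

/-- `G.PDesc m n` : `n` is a proper descendant of `m`, i.e. some directed path
from `m` to `n` contains a proper edge. -/
def PDesc (G : Episode) (m n : ℕ) : Prop :=
  ∃ a b, Relation.ReflTransGen G.edge m a ∧ G.proper a b ∧ Relation.ReflTransGen G.edge b n

/-- Well-formedness of an episode: events map into the nodes, every node carries an
event, edges run between nodes, the weak and proper edges are disjoint, and the
graph is acyclic (a DAG). -/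
structure WellFormed (G : Episode) : Prop where
  node_mem : ∀ e ∈ G.events, G.node e ∈ G.nodes
  node_surj : ∀ n ∈ G.nodes, ∃ e ∈ G.events, G.node e = n
  weak_mem : ∀ a b, G.weak a b → a ∈ G.nodes ∧ b ∈ G.nodes
  proper_mem : ∀ a b, G.proper a b → a ∈ G.nodes ∧ b ∈ G.nodes
  weak_proper_disjoint : ∀ a b, G.weak a b → G.proper a b → False
  acyclic : ∀ n, ¬ G.Desc n n

/-- The transitive closure of an episode: add an edge from every node to each of its
descendants, proper if the descendant is a proper descendant, weak otherwise. -/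
def tcl (G : Episode) : Episode :=
  { G with
    proper := fun a b => G.PDesc a b
    weak := fun a b => G.Desc a b ∧ ¬ G.PDesc a b }

/-- An episode is transitively closed if it coincides with its transitive closure. -/
def TransClosed (G : Episode) : Prop :=
  (∀ a b, G.proper a b ↔ G.PDesc a b) ∧
  (∀ a b, G.weak a b ↔ (G.Desc a b ∧ ¬ G.PDesc a b))

end Episode

/-- `m` is a coverage mapping of episode `G` into sequence `s`: an injective map from
the episode events into the sequence events preserving labels, mapping events of one
node to a common time stamp, and respecting weak and proper edges. -/
def IsCoverMap (s : EventSeq) (G : Episode) (m : ℕ → SeqEvent) : Prop :=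
  (∀ e ∈ G.events, m e ∈ s.events) ∧
  Set.InjOn m ↑G.events ∧
  (∀ e ∈ G.events, (m e).lab = G.lab e) ∧
  (∀ e ∈ G.events, ∀ f ∈ G.events, G.node e = G.node f → (m e).ts = (m f).ts) ∧
  (∀ e ∈ G.events, ∀ f ∈ G.events, G.Desc (G.node f) (G.node e) → (m f).ts ≤ (m e).ts) ∧
  (∀ e ∈ G.events, ∀ f ∈ G.events, G.PDesc (G.node f) (G.node e) → (m f).ts < (m e).ts)

/-- A sequence `s` covers an episode `G`. -/
def Covers (s : EventSeq) (G : Episode) : Prop := ∃ m, IsCoverMap s G m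

/-- `G ⪯ H` : every sequence covering `H` also covers `G`. -/
def Subepisode (G H : Episode) : Prop := ∀ s : EventSeq, Covers s H → Covers s G

/-- `G ∼ H` : `G ⪯ H` and `H ⪯ G`. -/
def EpisodeSimilar (G H : Episode) : Prop := Subepisode G H ∧ Subepisode H G

/-- The window `s[i, j]`: the subsequence of events with time stamps in `[i, j]`. -/
def EventSeq.window (s : EventSeq) (i j : ℤ) : EventSeq where
  events := s.events.filter (fun e => i ≤ e.ts ∧ e.ts ≤ j)
  id_inj := fun e he f hf h =>
    s.id_inj e (Finset.mem_filter.mp he).1 f (Finset.mem_filter.mp hf).1 h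
  ts_mono := fun e he f hf h =>
    s.ts_mono e (Finset.mem_filter.mp he).1 f (Finset.mem_filter.mp hf).1 h

/-- The support `fr(G; s)` with window size `ρ`: the number of integers `t` such that
the window `s[t, t + ρ - 1]` covers `G` (as an extended natural number). -/
noncomputable def support (ρ : ℤ) (s : EventSeq) (G : Episode) : ℕ∞ :=
  {t : ℤ | Covers (s.window t (t + ρ - 1)) G}.encard

/-- `first(i)` : the smallest time stamp in the range of the instance. -/
noncomputable def instFirst (G : Episode) (m : ℕ → SeqEvent) : ℤ :=
  sInf ((fun e => (m e).ts) '' ↑G.events)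

/-- `last(i)` : the largest time stamp in the range of the instance. -/
noncomputable def instLast (G : Episode) (m : ℕ → SeqEvent) : ℤ :=
  sSup ((fun e => (m e).ts) '' ↑G.events)

/-- `m` is an instance of `G` in `s` (with window size `ρ`): a coverage mapping of `G`
into `s` such that no used sequence event can be replaced by an unused one with the same
label, the same time stamp and a smaller id, and whose span is less than `ρ`. -/
def IsInstance (ρ : ℤ) (s : EventSeq) (G : Episode) (m : ℕ → SeqEvent) : Prop :=
  IsCoverMap s G m ∧
  (∀ e ∈ G.events, ∀ f ∈ s.events, (∀ e' ∈ G.events, m e' ≠ f) →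
      f.lab = (m e).lab → f.ts = (m e).ts → ¬ f.id < (m e).id) ∧
  instLast G m - instFirst G m ≤ ρ - 1

/-- The episode `G − V`: the induced subepisode of `G` on the nodes outside `V`,
obtained by deleting the nodes of `V`, their events, and all incident edges. -/
def Episode.eraseNodes (G : Episode) (V : Finset ℕ) : Episode where
  events := G.events.filter (fun e => G.node e ∉ V)
  lab := G.lab
  nodes := G.nodes \ V
  node := G.node
  weak := fun a b => G.weak a b ∧ a ∉ V ∧ b ∉ V
  proper := fun a b => G.proper a b ∧ a ∉ V ∧ b ∉ V

/-!
If `H` is transitively closed, a cover of `H − n` already respects every order constraint of `H`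
between nodes other than `n`, so all predecessors of `n` are mapped no later than all of its
successors, strictly so when a proper edge is involved. After doubling every time stamp there is
room for an integer time `t` between them, and inserting fresh events carrying the labels of `n`
at time `t` yields a sequence covering `H`. A cover of `G` in that sequence never uses a fresh
event, since `G` has none of those labels, so it comes from a cover of `G` in the original
sequence.
-/

theorem Finset.exists_between_of_forall_le {ι α : Type*} [LinearOrder α] [Nonempty α]
    {s t : Finset ι} {l u : ι → α} (h : ∀ i ∈ s, ∀ j ∈ t, l i ≤ u j) :
    ∃ x, (∀ i ∈ s, l i ≤ x) ∧ ∀ j ∈ t, x ≤ u j := by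
  by_cases hs : s.Nonempty
  · exact ⟨s.sup' hs l, fun i hi => le_sup' l hi,
      fun j hj => sup'_le hs l fun i hi => h i hi j hj⟩
  by_cases ht : t.Nonempty
  · exact ⟨t.inf' ht u, by simp_all, fun j hj => inf'_le u hj⟩
  exact ⟨Classical.arbitrary α, by simp_all⟩

namespace Episode

variable {H : Episode} {a b c : ℕ} {V : Finset ℕ}

theorem mem_eraseNodes_events {e : ℕ} :
    e ∈ (H.eraseNodes V).events ↔ e ∈ H.events ∧ H.node e ∉ V :=
  Finset.mem_filter

theorem PDesc.desc (h : H.PDesc a b) : H.Desc a b := by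
  obtain ⟨x, y, hax, hxy, hyb⟩ := h
  exact Relation.TransGen.trans_right hax
    (Relation.TransGen.trans_left (Relation.TransGen.single (Or.inr hxy)) hyb)

theorem Desc.trans_pdesc (h₁ : H.Desc a b) (h₂ : H.PDesc b c) : H.PDesc a c := by
  obtain ⟨x, y, hbx, hxy, hyc⟩ := h₂
  exact ⟨x, y, h₁.to_reflTransGen.trans hbx, hxy, hyc⟩

theorem PDesc.trans_desc (h₁ : H.PDesc a b) (h₂ : H.Desc b c) : H.PDesc a c := by
  obtain ⟨x, y, hax, hxy, hyb⟩ := h₁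
  exact ⟨x, y, hax, hxy, hyb.trans h₂.to_reflTransGen⟩

theorem edge_of_eraseNodes (h : (H.eraseNodes V).edge a b) : H.edge a b :=
  h.imp And.left And.left

theorem Desc.of_eraseNodes (h : (H.eraseNodes V).Desc a b) : H.Desc a b :=
  Relation.TransGen.mono (fun _ _ => edge_of_eraseNodes) _ _ h

theorem PDesc.of_eraseNodes (h : (H.eraseNodes V).PDesc a b) : H.PDesc a b := by
  obtain ⟨x, y, hax, hxy, hyb⟩ := h
  exact ⟨x, y, Relation.ReflTransGen.mono (fun _ _ => edge_of_eraseNodes) _ _ hax, hxy.1,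
    Relation.ReflTransGen.mono (fun _ _ => edge_of_eraseNodes) _ _ hyb⟩

theorem TransClosed.edge_of_desc (hH : H.TransClosed) (h : H.Desc a b) : H.edge a b := by
  by_cases hp : H.PDesc a b
  · exact Or.inr ((hH.1 a b).2 hp)
  · exact Or.inl ((hH.2 a b).2 ⟨h, hp⟩)

theorem TransClosed.desc_eraseNodes (hH : H.TransClosed) (h : H.Desc a b) (ha : a ∉ V)
    (hb : b ∉ V) : (H.eraseNodes V).Desc a b :=
  Relation.TransGen.single ((hH.edge_of_desc h).imp (⟨·, ha, hb⟩) (⟨·, ha, hb⟩))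

theorem TransClosed.pdesc_eraseNodes (hH : H.TransClosed) (h : H.PDesc a b) (ha : a ∉ V)
    (hb : b ∉ V) : (H.eraseNodes V).PDesc a b :=
  ⟨a, b, .refl, ⟨(hH.1 a b).2 h, ha, hb⟩, .refl⟩

end Episode

def IsTiming (G : Episode) (τ : ℕ → ℤ) : Prop :=
  (∀ e ∈ G.events, ∀ f ∈ G.events, G.node e = G.node f → τ e = τ f) ∧
  (∀ e ∈ G.events, ∀ f ∈ G.events, G.Desc (G.node f) (G.node e) → τ f ≤ τ e) ∧
  (∀ e ∈ G.events, ∀ f ∈ G.events, G.PDesc (G.node f) (G.node e) → τ f < τ e)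

theorem isCoverMap_iff {s : EventSeq} {G : Episode} {m : ℕ → SeqEvent} :
    IsCoverMap s G m ↔ (∀ e ∈ G.events, m e ∈ s.events) ∧ Set.InjOn m ↑G.events ∧
      (∀ e ∈ G.events, (m e).lab = G.lab e) ∧ IsTiming G fun e => (m e).ts :=
  Iff.rfl

namespace IsTiming

open Episode

variable {H : Episode} {V : Finset ℕ} {n : ℕ} {τ : ℕ → ℤ}

theorem eraseNodes (h : IsTiming H τ) : IsTiming (H.eraseNodes V) τ :=
  ⟨fun e he f hf => h.1 e (Finset.filter_subset _ _ he) f (Finset.filter_subset _ _ hf),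
    fun e he f hf hd => h.2.1 e (Finset.filter_subset _ _ he) f (Finset.filter_subset _ _ hf)
      hd.of_eraseNodes,
    fun e he f hf hd => h.2.2 e (Finset.filter_subset _ _ he) f (Finset.filter_subset _ _ hf)
      hd.of_eraseNodes⟩

theorem le_of_desc (hτ : IsTiming (H.eraseNodes V) τ) (hH : H.TransClosed) {e f : ℕ}
    (he : e ∈ H.events) (hf : f ∈ H.events) (heV : H.node e ∉ V) (hfV : H.node f ∉ V)
    (hd : H.Desc (H.node f) (H.node e)) : τ f ≤ τ e :=
  hτ.2.1 e (mem_eraseNodes_events.2 ⟨he, heV⟩) f (mem_eraseNodes_events.2 ⟨hf, hfV⟩)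
    (hH.desc_eraseNodes hd hfV heV)

theorem lt_of_pdesc (hτ : IsTiming (H.eraseNodes V) τ) (hH : H.TransClosed) {e f : ℕ}
    (he : e ∈ H.events) (hf : f ∈ H.events) (heV : H.node e ∉ V) (hfV : H.node f ∉ V)
    (hd : H.PDesc (H.node f) (H.node e)) : τ f < τ e :=
  hτ.2.2 e (mem_eraseNodes_events.2 ⟨he, heV⟩) f (mem_eraseNodes_events.2 ⟨hf, hfV⟩)
    (hH.pdesc_eraseNodes hd hfV heV)

theorem exists_time_eraseNode (hτ : IsTiming (H.eraseNodes {n}) τ) (hH : H.TransClosed)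
    (hn : ¬ H.Desc n n) :
    ∃ t, (∀ f ∈ H.events, H.Desc (H.node f) n →
        2 * τ f ≤ t ∧ (H.PDesc (H.node f) n → 2 * τ f < t)) ∧
      ∀ e ∈ H.events, H.Desc n (H.node e) →
        t ≤ 2 * τ e ∧ (H.PDesc n (H.node e) → t < 2 * τ e) := by
  classical
  have hne {a : ℕ} (h : H.Desc a n ∨ H.Desc n a) : a ∉ ({n} : Finset ℕ) :=
    Finset.notMem_singleton.2 fun ha => by subst ha; exact hn (h.elim id id)
  -- a strict constraint costs one unit, which the doubling of time stamps makes room for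
  obtain ⟨t, hlo, hhi⟩ := Finset.exists_between_of_forall_le
    (s := H.events.filter fun f => H.Desc (H.node f) n)
    (t := H.events.filter fun e => H.Desc n (H.node e))
    (l := fun f => 2 * τ f + if H.PDesc (H.node f) n then 1 else 0)
    (u := fun e => 2 * τ e - if H.PDesc n (H.node e) then 1 else 0) <| by
    simp only [Finset.mem_filter]
    rintro f ⟨hf, hfn⟩ e ⟨he, hen⟩
    have hle := hτ.le_of_desc hH he hf (hne (.inr hen)) (hne (.inl hfn))
      (Relation.TransGen.trans hfn hen)
    have hlt := hτ.lt_of_pdesc hH he hf (hne (.inr hen)) (hne (.inl hfn))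
    split_ifs with hpf hps hps
    · linarith [hlt (hpf.trans_desc hen)]
    · linarith [hlt (hpf.trans_desc hen)]
    · linarith [hlt (hfn.trans_pdesc hps)]
    · linarith
  refine ⟨t, fun f hf hfn => ?_, fun e he hen => ?_⟩
  · have hft := hlo f (Finset.mem_filter.2 ⟨hf, hfn⟩)
    refine ⟨by split_ifs at hft <;> omega, fun hp => ?_⟩
    rw [if_pos hp] at hft
    omega
  · have het := hhi e (Finset.mem_filter.2 ⟨he, hen⟩)
    refine ⟨by split_ifs at het <;> omega, fun hp => ?_⟩
    rw [if_pos hp] at het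
    omega

theorem extend_eraseNode (hτ : IsTiming (H.eraseNodes {n}) τ) (hH : H.TransClosed)
    (hn : ¬ H.Desc n n) :
    ∃ t, IsTiming H fun e => if H.node e = n then t else 2 * τ e := by
  obtain ⟨t, hpred, hsucc⟩ := hτ.exists_time_eraseNode hH hn
  have hV {e : ℕ} (h : H.node e ≠ n) : H.node e ∉ ({n} : Finset ℕ) :=
    Finset.notMem_singleton.2 h
  refine ⟨t, fun e he f hf hef => ?_, fun e he f hf hd => ?_, fun e he f hf hd => ?_⟩
  · by_cases hen : H.node e = n
    · simp [hen, ← hef]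
    · simp only [hen, ← hef, if_false]
      rw [hτ.1 e (mem_eraseNodes_events.2 ⟨he, hV hen⟩) f
        (mem_eraseNodes_events.2 ⟨hf, hV (hef ▸ hen)⟩) hef]
  all_goals
    by_cases hen : H.node e = n <;> by_cases hfn : H.node f = n <;>
      simp only [hen, hfn, if_true, if_false] at hd ⊢
  · exact absurd hd hn
  · exact (hpred f hf hd).1
  · exact (hsucc e he hd).1
  · linarith [hτ.le_of_desc hH he hf (hV hen) (hV hfn) hd]
  · exact absurd hd.desc hn
  · exact (hpred f hf hd.desc).2 hd
  · exact (hsucc e he hd.desc).2 hd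
  · linarith [hτ.lt_of_pdesc hH he hf (hV hen) (hV hfn) hd]

end IsTiming

def SeqEvent.double (u : SeqEvent) : SeqEvent := ⟨u.id, u.lab, 2 * u.ts⟩

theorem SeqEvent.double_injective : Function.Injective SeqEvent.double := by
  rintro ⟨_, _, _⟩ ⟨_, _, _⟩ h
  simp only [SeqEvent.double, SeqEvent.mk.injEq] at h
  obtain ⟨rfl, rfl, h⟩ := h
  rw [mul_right_injective₀ two_ne_zero h]

namespace EventSeq

variable (s : EventSeq) (t : ℤ) (E : Finset ℕ) (lab : ℕ → ℕ)

def double : EventSeq where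
  events := s.events.image SeqEvent.double
  id_inj := by
    simp only [Finset.mem_image]
    rintro _ ⟨u, hu, rfl⟩ _ ⟨w, hw, rfl⟩ h
    rw [s.id_inj u hu w hw h]
  ts_mono := by
    simp only [Finset.mem_image]
    rintro _ ⟨u, hu, rfl⟩ _ ⟨w, hw, rfl⟩ h
    exact mul_le_mul_of_nonneg_left (s.ts_mono u hu w hw h) zero_le_two

def idBound : ℕ := (s.events.filter (·.ts ≤ t)).sup (·.id + 1)

/-- Shifts the ids of the events after time `t`, freeing the ids `s.idBound t + e`, `e ∈ E`,
for `newEvent`. -/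
def relocate (u : SeqEvent) : SeqEvent :=
  { u with id := if u.id < s.idBound t then u.id else u.id + E.sup (· + 1) }

def newEvent (e : ℕ) : SeqEvent := ⟨s.idBound t + e, lab e, t⟩

variable {s t E lab}

theorem id_lt_idBound_iff {u : SeqEvent} (hu : u ∈ s.events) :
    u.id < s.idBound t ↔ u.ts ≤ t := by
  refine ⟨fun h => ?_, fun h => ?_⟩
  · obtain ⟨w, hw, huw⟩ := Finset.lt_sup_iff.1 h
    exact (s.ts_mono u hu w (Finset.mem_filter.1 hw).1 (Nat.lt_succ_iff.1 huw)).trans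
      (Finset.mem_filter.1 hw).2
  · exact Finset.le_sup (s := s.events.filter (·.ts ≤ t)) (f := (·.id + 1))
      (Finset.mem_filter.2 ⟨hu, h⟩)

theorem relocate_id_le_iff {u w : SeqEvent} :
    (s.relocate t E u).id ≤ (s.relocate t E w).id ↔ u.id ≤ w.id := by
  simp only [relocate]
  split_ifs <;> omega

theorem relocate_injective : Function.Injective (s.relocate t E) := by
  rintro ⟨i, a, x⟩ ⟨j, b, y⟩ h
  have hid := congrArg SeqEvent.id h
  obtain rfl : i = j := le_antisymm (relocate_id_le_iff.1 hid.le) (relocate_id_le_iff.1 hid.ge)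
  simp only [relocate, SeqEvent.mk.injEq] at h
  rw [h.2.1, h.2.2]

theorem relocate_id_ne_newEvent_id {u : SeqEvent} {e : ℕ} (he : e ∈ E) :
    (s.relocate t E u).id ≠ (s.newEvent t lab e).id := by
  have : e + 1 ≤ E.sup (· + 1) := Finset.le_sup (f := (· + 1)) he
  simp only [relocate, newEvent]
  split_ifs <;> omega

theorem newEvent_injective : Function.Injective (s.newEvent t lab) :=
  fun _ _ h => Nat.add_left_cancel (congrArg SeqEvent.id h)

variable (s t E lab)

def insertAt : EventSeq where
  events := s.events.image (s.relocate t E) ∪ E.image (s.newEvent t lab)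
  id_inj := by
    simp only [Finset.mem_union, Finset.mem_image]
    rintro _ (⟨u, hu, rfl⟩ | ⟨e, he, rfl⟩) _ (⟨w, hw, rfl⟩ | ⟨f, hf, rfl⟩) h
    · rw [s.id_inj u hu w hw
        (le_antisymm (relocate_id_le_iff.1 h.le) (relocate_id_le_iff.1 h.ge))]
    · exact absurd h (relocate_id_ne_newEvent_id hf)
    · exact absurd h.symm (relocate_id_ne_newEvent_id he)
    · rw [Nat.add_left_cancel h]
  ts_mono := by
    simp only [Finset.mem_union, Finset.mem_image]
    rintro _ (⟨u, hu, rfl⟩ | ⟨e, he, rfl⟩) _ (⟨w, hw, rfl⟩ | ⟨f, hf, rfl⟩) h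
    · exact s.ts_mono u hu w hw (relocate_id_le_iff.1 h)
    · have := (s.id_lt_idBound_iff (t := t) hu).1
      have : f + 1 ≤ E.sup (· + 1) := Finset.le_sup (f := (· + 1)) hf
      simp only [relocate, newEvent] at h ⊢
      split_ifs at h <;> omega
    · have := (s.id_lt_idBound_iff (t := t) hw).2
      simp only [relocate, newEvent] at h ⊢
      split_ifs at h <;> omega
    · exact le_rfl

variable {s t E lab}

theorem mem_insertAt {x : SeqEvent} :
    x ∈ (s.insertAt t E lab).events ↔
      (∃ u ∈ s.events, s.relocate t E u = x) ∨ ∃ e ∈ E, s.newEvent t lab e = x := by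
  simp [insertAt]

end EventSeq

theorem IsCoverMap.covers_of_factor {s s' : EventSeq} {G : Episode} {m : ℕ → SeqEvent}
    {φ : SeqEvent → SeqEvent} {g : ℤ → ℤ} (hm : IsCoverMap s' G m) (hg : StrictMono g)
    (hlab : ∀ u, (φ u).lab = u.lab) (hts : ∀ u, (φ u).ts = g u.ts)
    (hφ : ∀ e ∈ G.events, ∃ u ∈ s.events, φ u = m e) : Covers s G := by
  have : Nonempty SeqEvent := ⟨⟨0, 0, 0⟩⟩
  choose! u hu hφu using hφ
  obtain ⟨-, hinj, hlabm, hsame, hle, hlt⟩ := hm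
  have hts' {e : ℕ} (he : e ∈ G.events) : (m e).ts = g (u e).ts := by rw [← hφu e he, hts]
  refine ⟨u, hu, fun x hx y hy hxy => hinj hx hy ?_, fun e he => ?_,
    fun e he f hf h => hg.injective ?_, fun e he f hf h => hg.le_iff_le.1 ?_,
    fun e he f hf h => hg.lt_iff_lt.1 ?_⟩
  · rw [← hφu x hx, ← hφu y hy, hxy]
  · rw [← hlab, hφu e he, hlabm e he]
  · rw [← hts' he, ← hts' hf]; exact hsame e he f hf h
  · rw [← hts' he, ← hts' hf]; exact hle e he f hf h
  · rw [← hts' he, ← hts' hf]; exact hlt e he f hf h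

namespace Covers

variable {s : EventSeq} {G H : Episode}

theorem of_double (h : Covers s.double G) : Covers s G := by
  obtain ⟨m, hm⟩ := h
  exact hm.covers_of_factor (φ := SeqEvent.double) (strictMono_mul_left_of_pos two_pos)
    (fun _ => rfl) (fun _ => rfl) fun e he => Finset.mem_image.1 (hm.1 e he)

theorem of_insertAt {t : ℤ} {E : Finset ℕ} {lab : ℕ → ℕ}
    (h : Covers (s.insertAt t E lab) G)
    (hlab : ∀ e ∈ E, ∀ g ∈ G.events, G.lab g ≠ lab e) : Covers s G := by
  obtain ⟨m, hm⟩ := h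
  refine hm.covers_of_factor (φ := s.relocate t E) strictMono_id (fun _ => rfl) (fun _ => rfl)
    fun g hg => ?_
  rcases EventSeq.mem_insertAt.1 (hm.1 g hg) with ⟨u, hu, hx⟩ | ⟨e, he, hx⟩
  · exact ⟨u, hu, hx⟩
  · exact absurd (by rw [← hm.2.2.1 g hg, ← hx]; rfl) (hlab e he g hg)

theorem eraseNodes (h : Covers s H) (V : Finset ℕ) : Covers s (H.eraseNodes V) := by
  obtain ⟨m, hm⟩ := h
  obtain ⟨hmem, hinj, hlab, hτ⟩ := isCoverMap_iff.1 hm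
  exact ⟨m, fun e he => hmem e (Finset.filter_subset _ _ he),
    hinj.mono (Finset.coe_subset.2 (Finset.filter_subset _ _)),
    fun e he => hlab e (Finset.filter_subset _ _ he), hτ.eraseNodes⟩

theorem insertAt_of_eraseNode {n : ℕ} (h : Covers s (H.eraseNodes {n})) (hH : H.TransClosed)
    (hn : ¬ H.Desc n n) :
    ∃ t, Covers (s.double.insertAt t (H.events.filter (H.node · = n)) H.lab) H := by
  obtain ⟨m, hm⟩ := h
  obtain ⟨hmem, hinj, hlab, hτ⟩ := isCoverMap_iff.1 hm
  obtain ⟨t, ht⟩ := hτ.extend_eraseNode hH hn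
  set E := H.events.filter (H.node · = n)
  have hold {e : ℕ} (he : e ∈ H.events) (hen : H.node e ≠ n) :
      e ∈ (H.eraseNodes {n}).events :=
    Episode.mem_eraseNodes_events.2 ⟨he, Finset.notMem_singleton.2 hen⟩
  let m' e := if H.node e = n then s.double.newEvent t H.lab e
    else s.double.relocate t E (m e).double
  refine ⟨t, m', isCoverMap_iff.2
    ⟨fun e he => ?_, fun e he f hf hef => ?_, fun e he => ?_, ?_⟩⟩
  · refine EventSeq.mem_insertAt.2 ?_
    by_cases hen : H.node e = n
    · exact .inr ⟨e, Finset.mem_filter.2 ⟨he, hen⟩, by simp [m', hen]⟩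
    · exact .inl ⟨_, Finset.mem_image_of_mem _ (hmem e (hold he hen)), by simp [m', hen]⟩
  · by_cases hen : H.node e = n <;> by_cases hfn : H.node f = n <;>
      simp only [m', hen, hfn, if_true, if_false] at hef
    · exact EventSeq.newEvent_injective hef
    · exact absurd (congrArg SeqEvent.id hef).symm
        (EventSeq.relocate_id_ne_newEvent_id (Finset.mem_filter.2 ⟨he, hen⟩))
    · exact absurd (congrArg SeqEvent.id hef)
        (EventSeq.relocate_id_ne_newEvent_id (Finset.mem_filter.2 ⟨hf, hfn⟩))
    · exact hinj (hold he hen) (hold hf hfn)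
        (SeqEvent.double_injective (EventSeq.relocate_injective hef))
  · by_cases hen : H.node e = n
    · exact congrArg SeqEvent.lab (if_pos hen)
    · exact (congrArg SeqEvent.lab (if_neg hen)).trans (hlab e (hold he hen))
  · convert ht using 2 with e
    simp only [m']
    split_ifs <;> rfl

end Covers

theorem subepisode_eraseNode_iff_general (G H : Episode)
    (hH : H.WellFormed) (hHt : H.TransClosed) (n : ℕ)
    (hlab : ∀ e ∈ H.events, H.node e = n → ∀ g ∈ G.events, G.lab g ≠ H.lab e) :
    Subepisode G H ↔ Subepisode G (H.eraseNodes {n}) := by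
  refine ⟨fun hGH s hs => ?_, fun hGH' s hs => hGH' s (hs.eraseNodes {n})⟩
  obtain ⟨t, hcov⟩ := hs.insertAt_of_eraseNode hHt (hH.acyclic n)
  exact ((hGH _ hcov).of_insertAt fun e he => (Finset.mem_filter.1 he).elim (hlab e)).of_double

/-- Lemma 7 of the paper: let `G` and `H` be episodes with `H`
transitively closed and let `n` be a node of `H` none of whose event labels occurs
among the labels of `G`. Let `H'` be obtained from `H` by deleting the node `n`, its
events and all incident edges. Then `G ⪯ H` iff `G ⪯ H'`. -/
theorem subepisode_eraseNode_iff (G H : Episode)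
    (hG : G.WellFormed) (hH : H.WellFormed) (hHt : H.TransClosed)
    (n : ℕ) (hn : n ∈ H.nodes)
    (hlab : ∀ e ∈ H.events, H.node e = n → ∀ g ∈ G.events, G.lab g ≠ H.lab e) :
    Subepisode G H ↔ Subepisode G (H.eraseNodes {n}) :=
  subepisode_eraseNode_iff_general G H hH hHt n hlab
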